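/- arXiv:2007.15867 — 8 statements merged into one kernel-verified Lean document; each statement's English description precedes it below -/
import Mathlib

section
/- Let k be a commutative ring, h,t ∈ k, and A = k[x]/(x²−hx−t) with the Frobenius structure Δ(1) = 1⊗x + x⊗1 − h·1⊗1, Δ(x) = x⊗x + t·1⊗1, ε(1)=0, ε(x)=1. Then the 4Tu relation holds: (id_A ⊗ ηε) + (ηε ⊗ id_A) − (η⊗η)∘(εμ) − (Δη)∘(ε⊗ε) = 0 as an endomorphism of A⊗A. -/
open Polynomial TensorProduct

/-- The Frobenius algebra `C_{h,t} = k[x]/(x² - hx - t)`. -/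
noncomputable abbrev Cht (k : Type) [CommRing k] (h t : k) : Type :=
  AdjoinRoot (X ^ 2 - C h * X - C t : k[X])

/-- The generator `x` of `C_{h,t}`. -/
noncomputable abbrev xg (k : Type) [CommRing k] (h t : k) : Cht k h t :=
  AdjoinRoot.root _

set_option maxHeartbeats 1000000 in
/-- The 4Tu relation for the Frobenius algebra `C_{h,t}`:
`(id ⊗ ηε) + (ηε ⊗ id) − (η⊗η)∘(εμ) − (Δη)∘(ε⊗ε) = 0` on `A ⊗ A`. -/
theorem stmt1 (k : Type) [CommRing k] (h t : k)
    (Δ : Cht k h t →ₗ[k] Cht k h t ⊗[k] Cht k h t)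
    (ε : Cht k h t →ₗ[k] k)
    (hΔ1 : Δ 1 = 1 ⊗ₜ[k] xg k h t + xg k h t ⊗ₜ[k] 1 - h • ((1 : Cht k h t) ⊗ₜ[k] 1))
    (hΔx : Δ (xg k h t) = xg k h t ⊗ₜ[k] xg k h t + t • ((1 : Cht k h t) ⊗ₜ[k] 1))
    (hε1 : ε 1 = 0) (hεx : ε (xg k h t) = 1) :
    TensorProduct.map LinearMap.id ((Algebra.linearMap k (Cht k h t)).comp ε)
      + TensorProduct.map ((Algebra.linearMap k (Cht k h t)).comp ε) LinearMap.id
      - (TensorProduct.map (Algebra.linearMap k (Cht k h t)) (Algebra.linearMap k (Cht k h t))).comp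
          (((TensorProduct.lid k k).symm.toLinearMap).comp
            (ε.comp (LinearMap.mul' k (Cht k h t))))
      - (Δ.comp (Algebra.linearMap k (Cht k h t))).comp
          ((TensorProduct.lid k k).toLinearMap.comp (TensorProduct.map ε ε)) = 0 := by
  rcases subsingleton_or_nontrivial k with hk | hk
  · haveI := Module.subsingleton k (Cht k h t ⊗[k] Cht k h t)
    exact Subsingleton.elim _ _
  have hmonic : (X ^ 2 - C h * X - C t : k[X]).Monic := by
    have heq : (X ^ 2 - C h * X - C t : k[X]) = X ^ 2 - (C h * X + C t) := by ring
    rw [heq]; exact monic_X_pow_sub degree_linear_lt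
  set pb := AdjoinRoot.powerBasis' hmonic with hpb
  have hdim : pb.dim = 2 := by
    show (X ^ 2 - C h * X - C t : k[X]).natDegree = 2
    compute_degree!
  have hx2 : xg k h t ^ 2 = h • xg k h t + t • (1 : Cht k h t) := by
    have h0 := AdjoinRoot.eval₂_root (X ^ 2 - C h * X - C t : k[X])
    simp only [eval₂_sub, eval₂_mul, eval₂_pow, eval₂_X, eval₂_C, sub_eq_zero, Algebra.smul_def,
      sub_eq_iff_eq_add] at h0 ⊢
    rw [h0, AdjoinRoot.algebraMap_eq]; ring
  have hεxx : ε (xg k h t * xg k h t) = h := by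
    rw [← pow_two, hx2]; simp [hεx, hε1]
  apply (pb.basis.tensorProduct pb.basis).ext
  rintro ⟨i, j⟩
  have hi : (i : ℕ) < 2 := by have := i.isLt; omega
  have hj : (j : ℕ) < 2 := by have := j.isLt; omega
  rw [Module.Basis.tensorProduct_apply, pb.basis_eq_pow, pb.basis_eq_pow]
  have hgen : pb.gen = xg k h t := rfl
  rw [hgen]
  simp only [LinearMap.add_apply, LinearMap.sub_apply, LinearMap.coe_comp, Function.comp_apply,
    TensorProduct.map_tmul, LinearMap.mul'_apply, LinearMap.id_coe, id_eq,
    LinearEquiv.coe_coe, TensorProduct.lid_tmul, TensorProduct.lid_symm_apply,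
    Algebra.linearMap_apply, LinearMap.zero_apply, Algebra.algebraMap_eq_smul_one,
    map_smul]
  interval_cases hi' : (i : ℕ) <;> interval_cases hj' : (j : ℕ) <;>
    simp only [pow_zero, pow_one, hε1, hεx, hεxx, one_mul, mul_one, hΔ1, hΔx,
      zero_smul, smul_zero, one_smul, TensorProduct.tmul_zero, TensorProduct.zero_tmul,
      TensorProduct.smul_tmul', TensorProduct.tmul_smul, map_smul, smul_smul] <;>
    module
end

section
/- Let A = k[x]/(x²−hx−t) with the Frobenius structure above. Define μ̃ : A⊗A → A by μ̃ = μ − (μΔ)⊗ε in the sense μ̃(a⊗b) = μ(a⊗b) − ε(b)·μ(Δ(a)), where μΔ : A → A is the composite. Then μ̃ makes A into a module over the algebra A: μ̃∘(id⊗η) = id_A (unitality, i.e. μ̃(a⊗1) = a) and μ̃∘(μ̃⊗id) = μ̃∘(id⊗μ) (associativity, i.e. μ̃(μ̃(a⊗b)⊗c) = μ̃(a⊗bc)). -/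
open Polynomial TensorProduct

/-- The twisted action `μ̃(a⊗b) = ab − ε(b)·μΔ(a)` makes `A = C_{h,t}` into an `A`-module:
it is unital and associative. -/
theorem stmt3 (k : Type) [CommRing k] (h t : k)
    (Δ : Cht k h t →ₗ[k] Cht k h t ⊗[k] Cht k h t)
    (ε : Cht k h t →ₗ[k] k)
    (hΔ1 : Δ 1 = 1 ⊗ₜ[k] xg k h t + xg k h t ⊗ₜ[k] 1 - h • ((1 : Cht k h t) ⊗ₜ[k] 1))
    (hΔx : Δ (xg k h t) = xg k h t ⊗ₜ[k] xg k h t + t • ((1 : Cht k h t) ⊗ₜ[k] 1))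
    (hε1 : ε 1 = 0) (hεx : ε (xg k h t) = 1)
    (μt : Cht k h t ⊗[k] Cht k h t →ₗ[k] Cht k h t)
    (hμt : ∀ a b : Cht k h t,
      μt (a ⊗ₜ[k] b) = a * b - ε b • (LinearMap.mul' k (Cht k h t) (Δ a))) :
    (∀ a : Cht k h t, μt (a ⊗ₜ[k] 1) = a) ∧
    (∀ a b c : Cht k h t, μt (μt (a ⊗ₜ[k] b) ⊗ₜ[k] c) = μt (a ⊗ₜ[k] (b * c))) := by
  have hxx : xg k h t * xg k h t = h • xg k h t + t • (1 : Cht k h t) := by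
    have h0 : (X ^ 2 - C h * X - C t : k[X]).eval₂
        (AdjoinRoot.of (X ^ 2 - C h * X - C t)) (xg k h t) = 0 :=
      AdjoinRoot.eval₂_root _
    simp only [eval₂_sub, eval₂_mul, eval₂_pow, eval₂_X, eval₂_C] at h0
    have h1 : xg k h t ^ 2 = AdjoinRoot.of _ h * xg k h t + AdjoinRoot.of _ t := by
      linear_combination h0
    rw [← AdjoinRoot.algebraMap_eq, ← Algebra.smul_def,
      Algebra.algebraMap_eq_smul_one] at h1
    rw [← pow_two, h1]
  have hspan : ∀ a : Cht k h t, ∃ p q : k, a = p • 1 + q • xg k h t := by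
    intro a
    have ha : a ∈ Algebra.adjoin k ({xg k h t} : Set (Cht k h t)) := by
      rw [AdjoinRoot.adjoinRoot_eq_top]; trivial
    induction ha using Algebra.adjoin_induction with
    | mem y hy =>
      rw [Set.mem_singleton_iff] at hy
      exact ⟨0, 1, by rw [hy]; simp⟩
    | algebraMap r =>
      exact ⟨r, 0, by rw [Algebra.algebraMap_eq_smul_one]; simp⟩
    | add y z _ _ hy hz =>
      obtain ⟨p, q, rfl⟩ := hy; obtain ⟨r, s, rfl⟩ := hz
      exact ⟨p + r, q + s, by module⟩
    | mul y z _ _ hy hz =>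
      obtain ⟨p, q, rfl⟩ := hy; obtain ⟨r, s, rfl⟩ := hz
      refine ⟨p * r + q * s * t, p * s + q * r + q * s * h, ?_⟩
      simp only [mul_add, add_mul, smul_mul_assoc, mul_smul_comm, mul_one, one_mul,
        hxx, smul_add, smul_smul]
      module
  constructor
  · intro a
    rw [hμt, hε1, zero_smul, mul_one, sub_zero]
  · intro a b c
    obtain ⟨a0, a1, rfl⟩ := hspan a
    obtain ⟨b0, b1, rfl⟩ := hspan b
    obtain ⟨c0, c1, rfl⟩ := hspan c
    simp only [hμt, mul_add, add_mul, sub_mul, mul_sub, smul_mul_assoc, mul_smul_comm,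
      mul_one, one_mul, hxx, smul_add, smul_sub, smul_smul, map_add, map_sub, map_smul,
      hΔ1, hΔx, hε1, hεx, LinearMap.mul'_apply, smul_eq_mul, mul_zero, zero_smul,
      one_smul, zero_mul, add_zero, zero_add, sub_zero, smul_zero]
    module
end

section
/- Let A = k[x]/(x²−hx−t) with the Frobenius structure above. Consider the sequence of k-modules 0 → A → A⊗A → A → 0, where the first map is Δ̃ := Δ − (μΔ)⊗η (i.e. a ↦ Δ(a) − μΔ(a)⊗1) and the second map is μ. Setting s₁ = id_A⊗η : A → A⊗A (a ↦ a⊗1) and s₂ = id_A⊗ε : A⊗A → A (a⊗b ↦ ε(b)a), one has μ∘(id⊗η) = id_A, (id⊗ε)∘Δ̃ = id_A, and Δ̃∘(id⊗ε) + (id⊗η)∘μ = id_{A⊗A}; in particular the sequence is a contractible, split exact complex. -/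
open Polynomial TensorProduct

lemma xg_sq (k : Type) [CommRing k] (h t : k) :
    xg k h t ^ 2 = h • xg k h t + t • (1 : Cht k h t) := by
  have h0 : (AdjoinRoot.mk (X ^ 2 - C h * X - C t : k[X])) (X ^ 2 - C h * X - C t) = 0 :=
    AdjoinRoot.mk_self
  rw [map_sub, map_sub, map_pow, map_mul, AdjoinRoot.mk_X, AdjoinRoot.mk_C, AdjoinRoot.mk_C] at h0
  rw [Algebra.smul_def, Algebra.smul_def, mul_one, AdjoinRoot.algebraMap_eq]
  linear_combination h0

lemma ext1x (k : Type) [CommRing k] (h t : k) {M : Type} [AddCommMonoid M] [Module k M]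
    (f g : Cht k h t →ₗ[k] M) (H1 : f 1 = g 1) (Hx : f (xg k h t) = g (xg k h t)) : f = g := by
  have hmonic : (X ^ 2 - C h * X - C t : k[X]).Monic := by
    have e : (X ^ 2 - C h * X - C t : k[X]) = X ^ (1 + 1) - (C h * X + C t) := by ring
    rw [e]
    exact Polynomial.monic_X_pow_sub (lt_of_le_of_lt Polynomial.degree_linear_le (by decide : (1 : WithBot ℕ) < ((1 + 1 : ℕ) : WithBot ℕ)))
  have key : ∀ n : ℕ, f (xg k h t ^ n) = g (xg k h t ^ n) := by
    intro n
    induction n using Nat.strong_induction_on with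
    | _ n ih =>
      match n with
      | 0 => simpa using H1
      | 1 => simpa using Hx
      | (n + 2) =>
        have e : xg k h t ^ (n + 2) = h • xg k h t ^ (n + 1) + t • xg k h t ^ n := by
          have e2 : xg k h t ^ (n + 2) = xg k h t ^ n * xg k h t ^ 2 := by ring
          rw [e2, xg_sq, mul_add, mul_smul_comm, mul_smul_comm, mul_one, ← pow_succ]
        rw [e, map_add, map_smul, map_smul, map_add, map_smul, map_smul,
          ih (n + 1) (by omega), ih n (by omega)]
  apply Module.Basis.ext (AdjoinRoot.powerBasis' hmonic).basis
  intro i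
  rw [PowerBasis.coe_basis, AdjoinRoot.powerBasis'_gen]
  exact key _

/-- The sequence `0 → A →^{Δ̃} A⊗A →^{μ} A → 0` (with `Δ̃ = Δ − (μΔ)⊗η`) is a contractible
complex: `μ∘(id⊗η) = id`, `(id⊗ε)∘Δ̃ = id`, `Δ̃∘(id⊗ε) + (id⊗η)∘μ = id`, and it is split exact. -/
theorem stmt4 (k : Type) [CommRing k] (h t : k)
    (Δ : Cht k h t →ₗ[k] Cht k h t ⊗[k] Cht k h t)
    (ε : Cht k h t →ₗ[k] k)
    (hΔ1 : Δ 1 = 1 ⊗ₜ[k] xg k h t + xg k h t ⊗ₜ[k] 1 - h • ((1 : Cht k h t) ⊗ₜ[k] 1))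
    (hΔx : Δ (xg k h t) = xg k h t ⊗ₜ[k] xg k h t + t • ((1 : Cht k h t) ⊗ₜ[k] 1))
    (hε1 : ε 1 = 0) (hεx : ε (xg k h t) = 1)
    -- the twisted coaction `Δ̃(a) = Δ(a) − μΔ(a) ⊗ 1`
    (Δt : Cht k h t →ₗ[k] Cht k h t ⊗[k] Cht k h t)
    (hΔt : ∀ a : Cht k h t,
      Δt a = Δ a - (LinearMap.mul' k (Cht k h t) (Δ a)) ⊗ₜ[k] 1)
    -- `s₁ = id ⊗ η : A → A⊗A`
    (s₁ : Cht k h t →ₗ[k] Cht k h t ⊗[k] Cht k h t)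
    (hs₁ : ∀ a : Cht k h t, s₁ a = a ⊗ₜ[k] 1)
    -- `s₂ = id ⊗ ε : A⊗A → A`
    (s₂ : Cht k h t ⊗[k] Cht k h t →ₗ[k] Cht k h t)
    (hs₂ : ∀ a b : Cht k h t, s₂ (a ⊗ₜ[k] b) = ε b • a) :
    (LinearMap.mul' k (Cht k h t)).comp s₁ = LinearMap.id ∧
    s₂.comp Δt = LinearMap.id ∧
    Δt.comp s₂ + s₁.comp (LinearMap.mul' k (Cht k h t)) = LinearMap.id ∧
    (LinearMap.mul' k (Cht k h t)).comp Δt = 0 ∧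
    Function.Injective Δt ∧
    Function.Surjective (LinearMap.mul' k (Cht k h t)) ∧
    LinearMap.range Δt = LinearMap.ker (LinearMap.mul' k (Cht k h t)) := by
  have hΔt1 : Δt 1 = (1 : Cht k h t) ⊗ₜ[k] xg k h t - xg k h t ⊗ₜ[k] 1 := by
    rw [hΔt, hΔ1]
    simp only [map_add, map_sub, map_smul, LinearMap.mul'_apply, one_mul, mul_one]
    rw [sub_tmul, add_tmul, smul_tmul']
    abel
  have hΔtx : Δt (xg k h t) = xg k h t ⊗ₜ[k] xg k h t - h • (xg k h t ⊗ₜ[k] (1 : Cht k h t))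
      - t • ((1 : Cht k h t) ⊗ₜ[k] (1 : Cht k h t)) := by
    rw [hΔt, hΔx]
    simp only [map_add, map_smul, LinearMap.mul'_apply, one_mul, mul_one]
    rw [← pow_two, xg_sq]
    rw [add_tmul, add_tmul]
    simp only [← smul_tmul']
    abel
  have c1 : (LinearMap.mul' k (Cht k h t)).comp s₁ = LinearMap.id := by
    apply LinearMap.ext
    intro a
    rw [LinearMap.comp_apply, hs₁, LinearMap.mul'_apply, mul_one, LinearMap.id_apply]
  have c2 : s₂.comp Δt = LinearMap.id := by
    apply ext1x k h t
    · rw [LinearMap.comp_apply, hΔt1, map_sub, hs₂, hs₂, hεx, hε1, LinearMap.id_apply]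
      simp
    · rw [LinearMap.comp_apply, hΔtx, map_sub, map_sub, map_smul, map_smul, hs₂, hs₂, hs₂,
        hεx, hε1, LinearMap.id_apply]
      simp
  have c3 : Δt.comp s₂ + s₁.comp (LinearMap.mul' k (Cht k h t)) = LinearMap.id := by
    apply TensorProduct.ext
    apply ext1x k h t <;> apply ext1x k h t <;>
      simp only [LinearMap.compr₂_apply, LinearMap.compr₂ₛₗ_apply, TensorProduct.mk_apply, LinearMap.add_apply,
        LinearMap.comp_apply, LinearMap.id_apply, hs₂, hε1, hεx, LinearMap.mul'_apply,
        one_smul, zero_smul, map_zero, one_mul, mul_one, zero_add, hs₁, hΔt1, hΔtx]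
    all_goals try rw [← pow_two, xg_sq, add_tmul]
    all_goals try simp only [← smul_tmul']
    all_goals first | rfl | abel
  have c4 : (LinearMap.mul' k (Cht k h t)).comp Δt = 0 := by
    apply ext1x k h t <;>
      simp only [LinearMap.comp_apply, LinearMap.zero_apply, hΔt1, hΔtx, map_sub, map_smul,
        LinearMap.mul'_apply, one_mul, mul_one]
    · abel
    · rw [← pow_two, xg_sq]
      abel
  refine ⟨c1, c2, c3, c4, ?_, ?_, ?_⟩
  · intro a b hab
    have ha := LinearMap.ext_iff.mp c2 a
    have hb := LinearMap.ext_iff.mp c2 b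
    simp only [LinearMap.comp_apply, LinearMap.id_apply] at ha hb
    rw [← ha, ← hb, hab]
  · intro a
    have := LinearMap.ext_iff.mp c1 a
    simp only [LinearMap.comp_apply, LinearMap.id_apply] at this
    exact ⟨s₁ a, this⟩
  · apply le_antisymm
    · rintro _ ⟨a, rfl⟩
      have := LinearMap.ext_iff.mp c4 a
      simp only [LinearMap.comp_apply, LinearMap.zero_apply] at this
      exact LinearMap.mem_ker.mpr this
    · intro y hy
      have hy0 : LinearMap.mul' k (Cht k h t) y = 0 := LinearMap.mem_ker.mp hy
      have h3 := LinearMap.ext_iff.mp c3 y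
      simp only [LinearMap.add_apply, LinearMap.comp_apply, LinearMap.id_apply] at h3
      rw [hy0, map_zero, add_zero] at h3
      exact ⟨s₂ y, h3⟩
end

section
/- Let A = k[x]/(x²−hx−t) with the Frobenius structure above and let μ̃ := μ − (μΔ)⊗ε (so μ̃(a⊗b) = ab − ε(b)μΔ(a)). Then the sequence 0 → A →^Δ A⊗A →^{μ̃} A → 0 admits the chain contraction given by id⊗η and id⊗ε: μ̃∘(id⊗η) = id_A, (id⊗ε)∘Δ = id_A, and Δ∘(id⊗ε) + (id⊗η)∘μ̃ = id_{A⊗A}. In particular this sequence is split exact. -/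
open Polynomial TensorProduct

/-! The contraction identities only involve `Δ` and `ε` on `1` and `x`, so they can be checked
on the basis `1, x` of `A` and the induced basis of `A ⊗ A`; the relation `x² = hx + t` is never
used. Split exactness then holds for any chain contraction: apply
`Δ ∘ (id ⊗ ε) + (id ⊗ η) ∘ μ̃ = id` to `Δ a` and to `y ∈ ker μ̃`. -/

namespace LinearMap

variable {R M N P : Type*} [Semiring R] [AddCommMonoid M] [AddCommGroup N] [AddCommMonoid P]
  [Module R M] [Module R N] [Module R P] {f : M →ₗ[R] N} {g : N →ₗ[R] P}
  {r : N →ₗ[R] M} {s : P →ₗ[R] N}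

theorem comp_eq_zero_of_contraction (hgs : g ∘ₗ s = id) (hrf : r ∘ₗ f = id)
    (hcontr : f ∘ₗ r + s ∘ₗ g = id) : g ∘ₗ f = 0 := by
  ext a
  have hs : s (g (f a)) = 0 := by
    have hrfa : r (f a) = a := congr($hrf a)
    have : f (r (f a)) + s (g (f a)) = f a := congr($hcontr (f a))
    rwa [hrfa, add_eq_left] at this
  simpa [hs] using congr($hgs (g (f a))).symm

theorem exact_of_contraction (hgs : g ∘ₗ s = id) (hrf : r ∘ₗ f = id)
    (hcontr : f ∘ₗ r + s ∘ₗ g = id) : Function.Exact f g :=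
  exact_of_comp_of_mem_range (comp_eq_zero_of_contraction hgs hrf hcontr) fun y hy =>
    ⟨r y, by simpa [hy] using congr($hcontr y)⟩

end LinearMap

theorem AdjoinRoot.linearMap_ext_of_monic {R M : Type*} [CommRing R] [AddCommMonoid M]
    [Module R M] {g : R[X]} (hg : g.Monic) {f₁ f₂ : AdjoinRoot g →ₗ[R] M}
    (h : ∀ i < g.natDegree, f₁ (root g ^ i) = f₂ (root g ^ i)) : f₁ = f₂ :=
  (powerBasis' hg).basis.ext fun i => by
    simpa only [(powerBasis' hg).basis_eq_pow, powerBasis'_gen] using h i i.isLt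

theorem Cht.linearMap_ext {k : Type} {M : Type*} [CommRing k] [AddCommMonoid M] [Module k M]
    {h t : k} {f₁ f₂ : Cht k h t →ₗ[k] M} (h1 : f₁ 1 = f₂ 1) (hx : f₁ (xg k h t) = f₂ (xg k h t)) :
    f₁ = f₂ := by
  refine AdjoinRoot.linearMap_ext_of_monic (by monicity!) fun i hi => ?_
  have : i < 2 := hi.trans_le (by compute_degree)
  interval_cases i
  · simpa using h1
  · simpa using hx

/-- The sequence `0 → A →^{Δ} A⊗A →^{μ̃} A → 0` (with `μ̃ = μ − (μΔ)⊗ε`) admits the chain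
contraction `id⊗η`, `id⊗ε`: `μ̃∘(id⊗η) = id`, `(id⊗ε)∘Δ = id`,
`Δ∘(id⊗ε) + (id⊗η)∘μ̃ = id`; in particular it is split exact. -/
theorem stmt5 (k : Type) [CommRing k] (h t : k)
    (Δ : Cht k h t →ₗ[k] Cht k h t ⊗[k] Cht k h t)
    (ε : Cht k h t →ₗ[k] k)
    (hΔ1 : Δ 1 = 1 ⊗ₜ[k] xg k h t + xg k h t ⊗ₜ[k] 1 - h • ((1 : Cht k h t) ⊗ₜ[k] 1))
    (hΔx : Δ (xg k h t) = xg k h t ⊗ₜ[k] xg k h t + t • ((1 : Cht k h t) ⊗ₜ[k] 1))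
    (hε1 : ε 1 = 0) (hεx : ε (xg k h t) = 1)
    -- the twisted action `μ̃(a⊗b) = ab − ε(b)·μΔ(a)`
    (μt : Cht k h t ⊗[k] Cht k h t →ₗ[k] Cht k h t)
    (hμt : ∀ a b : Cht k h t,
      μt (a ⊗ₜ[k] b) = a * b - ε b • (LinearMap.mul' k (Cht k h t) (Δ a)))
    -- `s₁ = id ⊗ η : A → A⊗A`
    (s₁ : Cht k h t →ₗ[k] Cht k h t ⊗[k] Cht k h t)
    (hs₁ : ∀ a : Cht k h t, s₁ a = a ⊗ₜ[k] 1)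
    -- `s₂ = id ⊗ ε : A⊗A → A`
    (s₂ : Cht k h t ⊗[k] Cht k h t →ₗ[k] Cht k h t)
    (hs₂ : ∀ a b : Cht k h t, s₂ (a ⊗ₜ[k] b) = ε b • a) :
    μt.comp s₁ = LinearMap.id ∧
    s₂.comp Δ = LinearMap.id ∧
    Δ.comp s₂ + s₁.comp μt = LinearMap.id ∧
    μt.comp Δ = 0 ∧
    Function.Injective Δ ∧
    Function.Surjective μt ∧
    LinearMap.range Δ = LinearMap.ker μt := by
  have hμs₁ : μt.comp s₁ = LinearMap.id := by
    ext a
    simp [hs₁, hμt, hε1]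
  have hs₂Δ : s₂.comp Δ = LinearMap.id :=
    Cht.linearMap_ext (by simp [hΔ1, hs₂, hε1, hεx]) (by simp [hΔx, hs₂, hε1, hεx])
  have hcontr : Δ.comp s₂ + s₁.comp μt = LinearMap.id := by
    refine TensorProduct.ext (Cht.linearMap_ext ?_ ?_) <;> refine Cht.linearMap_ext ?_ ?_ <;>
      simp only [LinearMap.compr₂ₛₗ_apply, mk_apply, LinearMap.add_apply, LinearMap.comp_apply,
        LinearMap.id_apply, hs₁, hs₂, hμt, hΔ1, hΔx, hε1, hεx, zero_smul, one_smul, map_zero,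
        map_add, map_sub, map_smul, LinearMap.mul'_apply, mul_one, one_mul, zero_tmul, sub_tmul,
        add_tmul, ← smul_tmul'] <;>
      module
  have hexact := LinearMap.exact_of_contraction hμs₁ hs₂Δ hcontr
  exact ⟨hμs₁, hs₂Δ, hcontr, LinearMap.comp_eq_zero_of_contraction hμs₁ hs₂Δ hcontr,
    Function.LeftInverse.injective fun a => congr($hs₂Δ a),
    Function.RightInverse.surjective fun a => congr($hμs₁ a), hexact.linearMap_ker_eq.symm⟩
end

section
/- Let A = k[x]/(x²−hx−t) with the Frobenius structure above. Define Φ : A⊗A → A⊗A by Φ = (Δ − μΔ⊗η)∘(μ − μΔ⊗ε), i.e. Φ = Δ̃∘μ̃. Then the four-term sequence 0 → A →^Δ A⊗A →^Φ A⊗A →^μ A → 0 is a contractible chain complex, with contraction given by (id⊗ε) : A⊗A → A, (id⊗ηε) : A⊗A → A⊗A, and (id⊗η) : A → A⊗A; that is: Φ∘Δ = 0, μ∘Φ = 0, (id⊗ε)∘Δ = id_A, Δ∘(id⊗ε) + (id⊗ηε)∘Φ = id, Φ∘(id⊗ηε) + (id⊗η)∘μ = id, μ∘(id⊗η) = id_A.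 -/
/-!
`A` is spanned by `1, x` with `x² = hx + t`, so the values of `Δ` on `1` and `x` force
`Δ a = a ⊗ x + ax ⊗ 1 - h (a ⊗ 1)`, hence `μΔ a = (2x - h) a` and `Δ̃ a = a ⊗ x - ax ⊗ 1`.
In these closed forms `μ̃ ∘ Δ = 0` and `μ ∘ Δ̃ = 0` are one-line computations, and both homotopy
identities reduce to the splitting `a ⊗ b = ab ⊗ 1 + ε(b) (a ⊗ x - ax ⊗ 1)`, which holds because
`b - ε(b) x` is a scalar.
-/

open Polynomial TensorProduct

namespace TwistedFrobenius

variable {k A : Type*} [CommRing k] [CommRing A] [Algebra k A] {x : A} {h : k}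

theorem tmul_eq_mul_tmul_one_add (hspan : Submodule.span k {1, x} = ⊤) {ε : A →ₗ[k] k}
    (hε1 : ε 1 = 0) (hεx : ε x = 1) (a b : A) :
    a ⊗ₜ[k] b = (a * b) ⊗ₜ[k] 1 + ε b • (a ⊗ₜ[k] x - (a * x) ⊗ₜ[k] 1) := by
  obtain ⟨c, d, rfl⟩ := Submodule.mem_span_pair.mp (hspan ▸ Submodule.mem_top : b ∈ _)
  simp only [map_add, map_smul, hε1, hεx, smul_eq_mul, mul_zero, mul_one, zero_add, mul_add,
    mul_smul_comm, tmul_add, tmul_smul, add_tmul, ← smul_tmul']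
  module

variable {Δ : A →ₗ[k] A ⊗[k] A}

theorem comul_apply (hspan : Submodule.span k {1, x} = ⊤) {t : k} (hx : x * x = h • x + t • 1)
    (hΔ1 : Δ 1 = 1 ⊗ₜ[k] x + x ⊗ₜ[k] 1 - h • ((1 : A) ⊗ₜ[k] 1))
    (hΔx : Δ x = x ⊗ₜ[k] x + t • ((1 : A) ⊗ₜ[k] 1)) (a : A) :
    Δ a = a ⊗ₜ[k] x + (a * x) ⊗ₜ[k] 1 - h • (a ⊗ₜ[k] 1) := by
  obtain ⟨c, d, rfl⟩ := Submodule.mem_span_pair.mp (hspan ▸ Submodule.mem_top : a ∈ _)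
  simp only [map_add, map_smul, hΔ1, hΔx, add_mul, smul_mul_assoc, one_mul, hx, add_tmul,
    ← smul_tmul', smul_add, smul_sub]
  module

theorem mul'_comul_eq (hΔ : ∀ a, Δ a = a ⊗ₜ[k] x + (a * x) ⊗ₜ[k] 1 - h • (a ⊗ₜ[k] 1)) (a : A) :
    LinearMap.mul' k A (Δ a) = 2 • (a * x) - h • a := by
  simp only [hΔ, map_sub, map_add, map_smul, LinearMap.mul'_apply, mul_one]
  module

theorem twistedComul_eq (hΔ : ∀ a, Δ a = a ⊗ₜ[k] x + (a * x) ⊗ₜ[k] 1 - h • (a ⊗ₜ[k] 1))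
    {Δt : A →ₗ[k] A ⊗[k] A} (hΔt : ∀ a, Δt a = Δ a - (LinearMap.mul' k A (Δ a)) ⊗ₜ[k] 1)
    (a : A) :
    Δt a = a ⊗ₜ[k] x - (a * x) ⊗ₜ[k] 1 := by
  rw [hΔt, mul'_comul_eq hΔ, hΔ, sub_tmul, ← smul_tmul', ← smul_tmul']
  module

variable {ε : A →ₗ[k] k} {μt : A ⊗[k] A →ₗ[k] A}

theorem twistedMul_tmul_eq (hΔ : ∀ a, Δ a = a ⊗ₜ[k] x + (a * x) ⊗ₜ[k] 1 - h • (a ⊗ₜ[k] 1))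
    (hμt : ∀ a b, μt (a ⊗ₜ[k] b) = a * b - ε b • (LinearMap.mul' k A (Δ a))) (a b : A) :
    μt (a ⊗ₜ[k] b) = a * b - ε b • (2 • (a * x) - h • a) := by
  rw [hμt, mul'_comul_eq hΔ]

theorem twistedMul_comul (hΔ : ∀ a, Δ a = a ⊗ₜ[k] x + (a * x) ⊗ₜ[k] 1 - h • (a ⊗ₜ[k] 1))
    (hε1 : ε 1 = 0) (hεx : ε x = 1)
    (hμt : ∀ a b, μt (a ⊗ₜ[k] b) = a * b - ε b • (LinearMap.mul' k A (Δ a))) (a : A) :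
    μt (Δ a) = 0 := by
  simp only [hΔ, map_sub, map_add, map_smul, twistedMul_tmul_eq hΔ hμt, hε1, hεx, mul_one]
  module

end TwistedFrobenius

namespace Cht

variable {k : Type} [CommRing k] {h t : k}

theorem monic_X_sq_sub_C_mul_X_sub_C : (X ^ 2 - C h * X - C t : k[X]).Monic := by
  monicity!

theorem span_one_xg : Submodule.span k {(1 : Cht k h t), xg k h t} = ⊤ := by
  nontriviality k
  have hdim : (AdjoinRoot.powerBasis' (monic_X_sq_sub_C_mul_X_sub_C (h := h) (t := t))).dim = 2 := by
    rw [AdjoinRoot.powerBasis'_dim]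
    compute_degree!
  rw [← (AdjoinRoot.powerBasis' monic_X_sq_sub_C_mul_X_sub_C).basis.span_eq]
  congr 1
  ext a
  simp only [PowerBasis.coe_basis, Set.mem_range, AdjoinRoot.powerBasis'_gen, Set.mem_insert_iff,
    Set.mem_singleton_iff]
  constructor
  · rintro (rfl | rfl)
    · exact ⟨⟨0, by omega⟩, pow_zero _⟩
    · exact ⟨⟨1, by omega⟩, pow_one _⟩
  · rintro ⟨⟨i, hi⟩, rfl⟩
    obtain rfl | rfl : i = 0 ∨ i = 1 := by omega
    exacts [Or.inl (pow_zero _), Or.inr (pow_one _)]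

theorem xg_mul_xg : xg k h t * xg k h t = h • xg k h t + t • (1 : Cht k h t) := by
  have hroot : aeval (xg k h t) (X ^ 2 - C h * X - C t : k[X]) = 0 := by
    rw [AdjoinRoot.aeval_eq, AdjoinRoot.mk_self]
  simp only [map_sub, map_mul, aeval_X, aeval_C, Algebra.algebraMap_eq_smul_one, smul_mul_assoc,
    one_mul, sq] at hroot
  linear_combination (norm := module) hroot

end Cht

/-- With `Φ = Δ̃∘μ̃`, the four-term sequence `0 → A →^Δ A⊗A →^Φ A⊗A →^μ A → 0` is a
contractible chain complex, with contraction `(id⊗ε)`, `(id⊗ηε)`, `(id⊗η)`. -/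
theorem stmt6 (k : Type) [CommRing k] (h t : k)
    (Δ : Cht k h t →ₗ[k] Cht k h t ⊗[k] Cht k h t)
    (ε : Cht k h t →ₗ[k] k)
    (hΔ1 : Δ 1 = 1 ⊗ₜ[k] xg k h t + xg k h t ⊗ₜ[k] 1 - h • ((1 : Cht k h t) ⊗ₜ[k] 1))
    (hΔx : Δ (xg k h t) = xg k h t ⊗ₜ[k] xg k h t + t • ((1 : Cht k h t) ⊗ₜ[k] 1))
    (hε1 : ε 1 = 0) (hεx : ε (xg k h t) = 1)
    -- the twisted coaction `Δ̃(a) = Δ(a) − μΔ(a) ⊗ 1`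
    (Δt : Cht k h t →ₗ[k] Cht k h t ⊗[k] Cht k h t)
    (hΔt : ∀ a : Cht k h t,
      Δt a = Δ a - (LinearMap.mul' k (Cht k h t) (Δ a)) ⊗ₜ[k] 1)
    -- the twisted action `μ̃(a⊗b) = ab − ε(b)·μΔ(a)`
    (μt : Cht k h t ⊗[k] Cht k h t →ₗ[k] Cht k h t)
    (hμt : ∀ a b : Cht k h t,
      μt (a ⊗ₜ[k] b) = a * b - ε b • (LinearMap.mul' k (Cht k h t) (Δ a)))
    -- `s₁ = id ⊗ η : A → A⊗A`
    (s₁ : Cht k h t →ₗ[k] Cht k h t ⊗[k] Cht k h t)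
    (hs₁ : ∀ a : Cht k h t, s₁ a = a ⊗ₜ[k] 1)
    -- `s₂ = id ⊗ ε : A⊗A → A`
    (s₂ : Cht k h t ⊗[k] Cht k h t →ₗ[k] Cht k h t)
    (hs₂ : ∀ a b : Cht k h t, s₂ (a ⊗ₜ[k] b) = ε b • a)
    -- `sₘ = id ⊗ ηε : A⊗A → A⊗A`
    (sₘ : Cht k h t ⊗[k] Cht k h t →ₗ[k] Cht k h t ⊗[k] Cht k h t)
    (hsₘ : ∀ a b : Cht k h t, sₘ (a ⊗ₜ[k] b) = ε b • (a ⊗ₜ[k] (1 : Cht k h t))) :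
    (Δt.comp μt).comp Δ = 0 ∧
    (LinearMap.mul' k (Cht k h t)).comp (Δt.comp μt) = 0 ∧
    s₂.comp Δ = LinearMap.id ∧
    Δ.comp s₂ + sₘ.comp (Δt.comp μt) = LinearMap.id ∧
    (Δt.comp μt).comp sₘ + s₁.comp (LinearMap.mul' k (Cht k h t)) = LinearMap.id ∧
    (LinearMap.mul' k (Cht k h t)).comp s₁ = LinearMap.id := by
  have hΔ := TwistedFrobenius.comul_apply Cht.span_one_xg Cht.xg_mul_xg hΔ1 hΔx
  have hΔt' := TwistedFrobenius.twistedComul_eq hΔ hΔt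
  have hμt' := TwistedFrobenius.twistedMul_tmul_eq hΔ hμt
  have hsplit := TwistedFrobenius.tmul_eq_mul_tmul_one_add Cht.span_one_xg hε1 hεx
  refine ⟨?_, ?_, ?_, ?_, ?_, ?_⟩
  · ext a
    simp only [LinearMap.comp_apply, TwistedFrobenius.twistedMul_comul hΔ hε1 hεx hμt, map_zero,
      LinearMap.zero_apply]
  · refine TensorProduct.ext' fun a b => ?_
    simp only [LinearMap.comp_apply, hΔt', map_sub, LinearMap.mul'_apply, mul_one, sub_self,
      LinearMap.zero_apply]
  · ext a
    simp [hΔ, hs₂, hε1, hεx]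
  · refine TensorProduct.ext' fun a b => ?_
    simp only [LinearMap.add_apply, LinearMap.comp_apply, LinearMap.id_apply, hs₂, hΔt', hμt',
      map_sub, hsₘ, hε1, hεx, hΔ]
    conv_rhs => rw [hsplit a b]
    simp only [smul_mul_assoc, one_smul, zero_smul, sub_zero, sub_tmul, ← smul_tmul']
    module
  · refine TensorProduct.ext' fun a b => ?_
    simp only [LinearMap.add_apply, LinearMap.comp_apply, LinearMap.id_apply, hs₁, hΔt', hμt',
      map_smul, hsₘ, hε1, LinearMap.mul'_apply, mul_one, zero_smul, sub_zero]
    rw [hsplit a b, add_comm]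
  · ext a
    simp [hs₁]
end

section
/- Let X^{i,j} be a double complex in a preadditive category with commuting differentials d_H : X^{i,j} → X^{i+1,j}, d_V : X^{i,j} → X^{i,j+1} (d_H² = 0, d_V² = 0, d_H d_V = d_V d_H), and suppose each row is equipped with morphisms θ : X^{i,j} → X^{i-1,j} satisfying d_H θ + θ d_H = id and θ∘θ = 0. Define Θ_r : X^{i,j} → X^{i-r,j+r-1} inductively by Θ_1 := θ and Θ_{r+1} := θ ∘ d_V ∘ Θ_r. Then for all r ≥ 1: d_H Θ_{r+1} − d_V Θ_r = (−1)^{r+1} (Θ_{r+1} d_H − Θ_r d_V) as morphisms X^{i,j} → X^{i-r,j+r}. -/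
open CategoryTheory

/-- Index-cast morphism in a doubly ℤ-indexed family of objects. -/
def cast2 {A : Type*} [Category A] (X : ℤ → ℤ → A) {i i' j j' : ℤ}
    (hi : i = i') (hj : j = j') : X i j ⟶ X i' j' :=
  eqToHom (by rw [hi, hj])

section
variable {A : Type*} [Category A] (X : ℤ → ℤ → A)

lemma pushH (dH : ∀ i j : ℤ, X i j ⟶ X (i + 1) j)
    {a b c d : ℤ} (hi : c = a) (hj : d = b) :
    eqToHom (show X c d = X a b by rw [hi, hj]) ≫ dH a b
      = dH c d ≫ eqToHom (by rw [hi, hj]) := by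
  subst hi; subst hj; simp

lemma pushV (dV : ∀ i j : ℤ, X i j ⟶ X i (j + 1))
    {a b c d : ℤ} (hi : c = a) (hj : d = b) :
    eqToHom (show X c d = X a b by rw [hi, hj]) ≫ dV a b
      = dV c d ≫ eqToHom (by rw [hi, hj]) := by
  subst hi; subst hj; simp

lemma pushT (θ : ∀ i j : ℤ, X i j ⟶ X (i - 1) j)
    {a b c d : ℤ} (hi : c = a) (hj : d = b) :
    eqToHom (show X c d = X a b by rw [hi, hj]) ≫ θ a b
      = θ c d ≫ eqToHom (by rw [hi, hj]) := by
  subst hi; subst hj; simp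

lemma pushTh (Θ : ∀ (r : ℕ) (i j : ℤ), X i j ⟶ X (i - r) (j + r - 1))
    (r : ℕ) {a b c d : ℤ} (hi : c = a) (hj : d = b) :
    eqToHom (show X c d = X a b by rw [hi, hj]) ≫ Θ r a b
      = Θ r c d ≫ eqToHom (by rw [hi, hj]) := by
  subst hi; subst hj; simp

lemma pushH_assoc (dH : ∀ i j : ℤ, X i j ⟶ X (i + 1) j)
    {a b c d : ℤ} (hi : c = a) (hj : d = b) {Z : A} (g : X (a + 1) b ⟶ Z) :
    eqToHom (show X c d = X a b by rw [hi, hj]) ≫ dH a b ≫ g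
      = dH c d ≫ eqToHom (show X (c + 1) d = X (a + 1) b by rw [hi, hj]) ≫ g := by
  subst hi; subst hj; simp

lemma pushV_assoc (dV : ∀ i j : ℤ, X i j ⟶ X i (j + 1))
    {a b c d : ℤ} (hi : c = a) (hj : d = b) {Z : A} (g : X a (b + 1) ⟶ Z) :
    eqToHom (show X c d = X a b by rw [hi, hj]) ≫ dV a b ≫ g
      = dV c d ≫ eqToHom (show X c (d + 1) = X a (b + 1) by rw [hi, hj]) ≫ g := by
  subst hi; subst hj; simp

lemma pushT_assoc (θ : ∀ i j : ℤ, X i j ⟶ X (i - 1) j)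
    {a b c d : ℤ} (hi : c = a) (hj : d = b) {Z : A} (g : X (a - 1) b ⟶ Z) :
    eqToHom (show X c d = X a b by rw [hi, hj]) ≫ θ a b ≫ g
      = θ c d ≫ eqToHom (show X (c - 1) d = X (a - 1) b by rw [hi, hj]) ≫ g := by
  subst hi; subst hj; simp

lemma pushTh_assoc (Θ : ∀ (r : ℕ) (i j : ℤ), X i j ⟶ X (i - r) (j + r - 1))
    (r : ℕ) {a b c d : ℤ} (hi : c = a) (hj : d = b) {Z : A}
    (g : X (a - r) (b + r - 1) ⟶ Z) :
    eqToHom (show X c d = X a b by rw [hi, hj]) ≫ Θ r a b ≫ g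
      = Θ r c d ≫ eqToHom (show X (c - r) (d + r - 1) = X (a - r) (b + r - 1) by rw [hi, hj]) ≫ g := by
  subst hi; subst hj; simp


end

/-- For a double complex with a horizontal contraction `θ` satisfying `θ∘θ = 0`, and
`Θ_1 := θ`, `Θ_{r+1} := θ ∘ d_V ∘ Θ_r`, one has, for all `r ≥ 1`,
`d_H Θ_{r+1} − d_V Θ_r = (−1)^{r+1} (Θ_{r+1} d_H − Θ_r d_V)`. -/
theorem stmt10 {A : Type*} [Category A] [Preadditive A]
    (X : ℤ → ℤ → A)
    (dH : ∀ i j : ℤ, X i j ⟶ X (i + 1) j)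
    (dV : ∀ i j : ℤ, X i j ⟶ X i (j + 1))
    (hHH : ∀ i j : ℤ, dH i j ≫ dH (i + 1) j = 0)
    (hVV : ∀ i j : ℤ, dV i j ≫ dV i (j + 1) = 0)
    (hHV : ∀ i j : ℤ, dH i j ≫ dV (i + 1) j = dV i j ≫ dH i (j + 1))
    (θ : ∀ i j : ℤ, X i j ⟶ X (i - 1) j)
    (hcontr : ∀ i j : ℤ,
      θ i j ≫ dH (i - 1) j ≫ cast2 X (by omega) rfl
        + dH i j ≫ θ (i + 1) j ≫ cast2 X (by omega) rfl = 𝟙 (X i j))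
    (hθθ : ∀ i j : ℤ, θ i j ≫ θ (i - 1) j = 0)
    (Θ : ∀ (r : ℕ) (i j : ℤ), X i j ⟶ X (i - r) (j + r - 1))
    (hΘ1 : ∀ i j : ℤ, Θ 1 i j = θ i j ≫ cast2 X (by omega) (by omega))
    (hΘsucc : ∀ (r : ℕ), 1 ≤ r → ∀ i j : ℤ,
      Θ (r + 1) i j
        = Θ r i j ≫ dV _ _ ≫ cast2 X rfl (by omega)
            ≫ θ (i - r) (j + r) ≫ cast2 X (by omega) (by omega)) :
    ∀ (r : ℕ), 1 ≤ r → ∀ i j : ℤ,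
      (Θ (r + 1) i j ≫ dH _ _ ≫ cast2 X (i' := i - r) (j' := j + r) (by omega) (by omega))
        - (Θ r i j ≫ dV _ _ ≫ cast2 X (i' := i - r) (j' := j + r) rfl (by omega))
      = ((-1 : ℤ) ^ (r + 1)) •
        ((dH i j ≫ Θ (r + 1) (i + 1) j
            ≫ cast2 X (i' := i - r) (j' := j + r) (by omega) (by omega))
          - (dV i j ≫ Θ r i (j + 1)
            ≫ cast2 X (i' := i - r) (j' := j + r) rfl (by omega))) := by
  have θdH : ∀ (a b : ℤ) {Z : A} (g : X (a - 1 + 1) b ⟶ Z),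
      θ a b ≫ dH (a - 1) b ≫ g
        = eqToHom (show X a b = X (a - 1 + 1) b by rw [show a - 1 + 1 = a by omega]) ≫ g
          - dH a b ≫ θ (a + 1) b
              ≫ eqToHom (show X (a + 1 - 1) b = X (a - 1 + 1) b by
                  rw [show a + 1 - 1 = a - 1 + 1 by omega]) ≫ g := by
    intro a b Z g
    have h2 : θ a b ≫ dH (a - 1) b ≫ cast2 X (by omega) rfl
        = 𝟙 (X a b) - dH a b ≫ θ (a + 1) b ≫ cast2 X (by omega) rfl :=
      eq_sub_of_add_eq (hcontr a b)
    have h3 := congrArg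
      (fun f => f ≫ (eqToHom (show X a b = X (a - 1 + 1) b by
        rw [show a - 1 + 1 = a by omega]) ≫ g)) h2
    simpa (disch := omega) only [cast2, Category.assoc, eqToHom_trans,
      eqToHom_trans_assoc, eqToHom_refl, Category.comp_id, Category.id_comp,
      Preadditive.sub_comp] using h3
  have hVH : ∀ (a b : ℤ) {Z : A} (g : X (a + 1) (b + 1) ⟶ Z),
      dV a b ≫ dH a (b + 1) ≫ g = dH a b ≫ dV (a + 1) b ≫ g := by
    intro a b Z g
    rw [← Category.assoc, ← hHV, Category.assoc]
  have hVV' : ∀ (a b : ℤ) {Z : A} (g : X a (b + 1 + 1) ⟶ Z),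
      dV a b ≫ dV a (b + 1) ≫ g = 0 := by
    intro a b Z g
    rw [← Category.assoc, hVV, Limits.zero_comp]
  intro r hr
  induction r, hr using Nat.le_induction with
  | base =>
    intro i j
    simp only [hΘsucc 1 le_rfl, hΘ1]
    simp (disch := omega) only [cast2, Category.assoc, pushH X dH, pushV X dV,
      pushT X θ, pushTh X Θ, pushH_assoc X dH, pushV_assoc X dV, pushT_assoc X θ, pushTh_assoc X Θ, eqToHom_trans, eqToHom_trans_assoc, eqToHom_refl,
      Category.comp_id, Category.id_comp]
    rw [θdH (i - 1) (j + 1)]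
    simp (disch := omega) only [cast2, Category.assoc, pushH X dH, pushV X dV,
      pushT X θ, pushTh X Θ, pushH_assoc X dH, pushV_assoc X dV, pushT_assoc X θ,
      pushTh_assoc X Θ, eqToHom_trans, eqToHom_trans_assoc, eqToHom_refl,
      Category.comp_id, Category.id_comp, Preadditive.comp_sub, Preadditive.sub_comp]
    rw [hVH (i - 1) j]
    rw [θdH i j]
    simp (disch := omega) only [cast2, Category.assoc, pushH X dH, pushV X dV,
      pushT X θ, pushTh X Θ, pushH_assoc X dH, pushV_assoc X dV, pushT_assoc X θ,
      pushTh_assoc X Θ, eqToHom_trans, eqToHom_trans_assoc, eqToHom_refl,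
      Category.comp_id, Category.id_comp, Preadditive.comp_sub, Preadditive.sub_comp]
    norm_num
  | succ r hr ih =>
    intro i j
    simp only [hΘsucc (r + 1) (by omega), hΘsucc r hr]
    simp (disch := omega) only [cast2, Category.assoc, pushH X dH, pushV X dV,
      pushT X θ, pushTh X Θ, pushH_assoc X dH, pushV_assoc X dV, pushT_assoc X θ,
      pushTh_assoc X Θ, eqToHom_trans, eqToHom_trans_assoc, eqToHom_refl,
      Category.comp_id, Category.id_comp, Preadditive.comp_sub, Preadditive.sub_comp,
      Preadditive.zsmul_comp, Preadditive.comp_zsmul]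
    rw [θdH (i - (r:ℤ) - 1) (j + (r:ℤ) - 1 + 1 + 1)]
    simp (disch := omega) only [cast2, Category.assoc, pushH X dH, pushV X dV,
      pushT X θ, pushTh X Θ, pushH_assoc X dH, pushV_assoc X dV, pushT_assoc X θ,
      pushTh_assoc X Θ, eqToHom_trans, eqToHom_trans_assoc, eqToHom_refl,
      Category.comp_id, Category.id_comp, Preadditive.comp_sub, Preadditive.sub_comp,
      Preadditive.zsmul_comp, Preadditive.comp_zsmul]
    rw [hVH (i - (r:ℤ) - 1) (j + (r:ℤ) - 1 + 1)]
    try simp (disch := omega) only [cast2, Category.assoc, pushH X dH, pushV X dV,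
      pushT X θ, pushTh X Θ, pushH_assoc X dH, pushV_assoc X dV, pushT_assoc X θ,
      pushTh_assoc X Θ, eqToHom_trans, eqToHom_trans_assoc, eqToHom_refl,
      Category.comp_id, Category.id_comp, Preadditive.comp_sub, Preadditive.sub_comp,
      Preadditive.zsmul_comp, Preadditive.comp_zsmul]
    have key := congrArg (fun f => f ≫ (dV (i - (r:ℤ)) (j + (r:ℤ))
      ≫ θ (i - (r:ℤ)) (j + (r:ℤ) + 1)
      ≫ cast2 X (show i - (r:ℤ) - 1 = i - ((r+1 : ℕ) : ℤ) by push_cast; ring)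
          (show j + (r:ℤ) + 1 = j + ((r+1 : ℕ) : ℤ) by push_cast; ring))) (ih i j)
    simp only [hΘsucc r hr] at key
    simp (disch := omega) only [cast2, Category.assoc, pushH X dH, pushV X dV,
      pushT X θ, pushTh X Θ, pushH_assoc X dH, pushV_assoc X dV, pushT_assoc X θ,
      pushTh_assoc X Θ, eqToHom_trans, eqToHom_trans_assoc, eqToHom_refl,
      Category.comp_id, Category.id_comp, Preadditive.comp_sub, Preadditive.sub_comp,
      Preadditive.zsmul_comp, Preadditive.comp_zsmul] at key
    rw [hVV' (i - (r:ℤ)) (j + (r:ℤ) - 1)] at key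
    rw [Limits.comp_zero, sub_zero] at key
    rw [key, pow_succ, mul_neg_one, neg_smul, sub_sub_cancel_left, neg_neg,
      pow_succ, pow_succ, mul_neg_one, mul_neg_one, neg_neg]
end

section
/- With E_S(α) as above, for each a ∈ S define λ_a : E_S(α) → E_S(α + a) induced by sending a word w = a'₁⋯a'_{i-1} a a'_{i+1}⋯a'_n (where a occurs in position i) to (−1)^{α(a'₁)+⋯+α(a'_{i-1})} w, and similarly ρ_a using the letters after a. Then for distinct a, b ∈ S: λ_a λ_b = −λ_b λ_a, ρ_a ρ_b = −ρ_b ρ_a, and λ_a ρ_b = ρ_b λ_a as maps E_S(α) → E_S(α+a+b). -/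
/-! Every map in sight multiplies each word by a sign, so each identity reduces to an identity
of exponents in `ZMod 2`, checked word by word. Flipping the weight of `b` shifts the weight of
the letters before (after) `a` by the number of `b`s before (after) `a`. In a word containing
`a ≠ b` exactly once each, `b` precedes `a` exactly when `a` follows `b`, and exactly one of
`a`, `b` precedes the other: the first fact makes `λ_a` and `ρ_b` commute, the second produces
the extra sign in `λ_a λ_b = −λ_b λ_a` and `ρ_a ρ_b = −ρ_b ρ_a`. -/

/-- Total orderings of `S`, encoded as words (lists) in which every element of `S`
occurs exactly once. -/
def OrdWord (S : Type) : Type := {l : List S // l.Nodup ∧ ∀ s : S, s ∈ l}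

/-- The sign `(−1)^e` for `e : ZMod 2`. -/
def signZ2 (k : Type) [CommRing k] (e : ZMod 2) : k := (-1 : k) ^ e.val

/-- Generators of the submodule of relations defining `E_S(α)`. -/
def relSet (k : Type) [CommRing k] (S : Type) (α : S → ZMod 2) :
    Set (OrdWord S →₀ k) :=
  {y | ∃ (l₁ l₂ : List S) (a b : S) (w w' : OrdWord S),
    w.1 = l₁ ++ a :: b :: l₂ ∧ w'.1 = l₁ ++ b :: a :: l₂ ∧
    y = Finsupp.single w 1 - signZ2 k (α a * α b) • Finsupp.single w' 1}

/-- The submodule of relations defining `E_S(α)`. -/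
noncomputable def relMod (k : Type) [CommRing k] (S : Type) (α : S → ZMod 2) :
    Submodule k (OrdWord S →₀ k) :=
  Submodule.span k (relSet k S α)

/-- `E_S(α)`, the module of `α`-weighted signs on `S`. -/
abbrev EMod (k : Type) [CommRing k] (S : Type) (α : S → ZMod 2) : Type :=
  (OrdWord S →₀ k) ⧸ relMod k S α

/-- The class `[w] ∈ E_S(α)` of a word `w`. -/
noncomputable def mkE (k : Type) [CommRing k] (S : Type) (α : S → ZMod 2)
    (w : OrdWord S) : EMod k S α :=
  Submodule.Quotient.mk (Finsupp.single w 1)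

/-- The weight function `α` with the value at `a` flipped (i.e. `α + a`). -/
def flipAt (S : Type) [DecidableEq S] (α : S → ZMod 2) (a : S) : S → ZMod 2 :=
  fun s => if s = a then α s + 1 else α s

/-- The sum of the `α`-weights of the letters preceding `a` in the word `w`. -/
def preSum (S : Type) [DecidableEq S] (α : S → ZMod 2) (a : S) (w : OrdWord S) :
    ZMod 2 :=
  ((w.1.takeWhile (fun s => s ≠ a)).map α).sum

/-- The sum of the `α`-weights of the letters following `a` in the word `w`. -/
def sufSum (S : Type) [DecidableEq S] (α : S → ZMod 2) (a : S) (w : OrdWord S) :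
    ZMod 2 :=
  (((w.1.dropWhile (fun s => s ≠ a)).drop 1).map α).sum

namespace List

variable {S : Type*} [DecidableEq S] {a b : S}

theorem dropWhile_ne_of_mem : ∀ {l : List S}, a ∈ l →
    l.dropWhile (· ≠ a) = a :: (l.dropWhile (· ≠ a)).drop 1
  | x :: t, h => by
    by_cases hx : x = a
    · simp [hx]
    · simpa [hx] using dropWhile_ne_of_mem (by simpa [Ne.symm hx] using h)

theorem count_takeWhile_ne_add_count_drop_dropWhile_ne (hba : b ≠ a) {l : List S}
    (ha : a ∈ l) :
    (l.takeWhile (· ≠ a)).count b + ((l.dropWhile (· ≠ a)).drop 1).count b = l.count b := by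
  conv_rhs => rw [← takeWhile_append_dropWhile (p := (· ≠ a)) (l := l), dropWhile_ne_of_mem ha]
  simp [count_append, hba.symm]

theorem count_takeWhile_ne_eq_count_drop_dropWhile_ne (hab : a ≠ b) : ∀ {l : List S},
    l.Nodup → a ∈ l → b ∈ l →
    (l.takeWhile (· ≠ a)).count b = ((l.dropWhile (· ≠ b)).drop 1).count a
  | x :: t, hnd, ha, hb => by
    obtain ⟨hxt, hnd⟩ := nodup_cons.1 hnd
    by_cases hxa : x = a
    · subst hxa
      rw [takeWhile_cons_of_neg (by simp), dropWhile_cons_of_pos (by simpa using hab), count_nil,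
        eq_comm, count_eq_zero]
      exact fun h => hxt (((drop_sublist _ _).trans (dropWhile_sublist _)).subset h)
    by_cases hxb : x = b
    · subst hxb
      rw [takeWhile_cons_of_pos (by simpa using hxa), dropWhile_cons_of_neg (by simp),
        count_cons_self, drop_one, tail_cons,
        count_eq_zero.2 fun h => hxt ((takeWhile_sublist _).subset h),
        count_eq_one_of_mem hnd (by simpa [Ne.symm hxa] using ha)]
    simpa [hxa, hxb] using count_takeWhile_ne_eq_count_drop_dropWhile_ne hab hnd
      (by simpa [Ne.symm hxa] using ha) (by simpa [Ne.symm hxb] using hb)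

end List

section Signs

variable {k : Type} [CommRing k]

theorem signZ2_add (e f : ZMod 2) : signZ2 k (e + f) = signZ2 k e * signZ2 k f := by
  rw [signZ2, ZMod.val_add, ← neg_one_pow_eq_pow_mod_two, pow_add, signZ2, signZ2]

theorem signZ2_one : signZ2 k 1 = -1 :=
  pow_one _

theorem signZ2_add_one (e : ZMod 2) : signZ2 k (e + 1) = -signZ2 k e := by
  rw [signZ2_add, signZ2_one, mul_neg_one]

end Signs

section Weights

variable {S : Type} [DecidableEq S]

theorem sum_map_flipAt (α : S → ZMod 2) (b : S) :
    ∀ l : List S, (l.map (flipAt S α b)).sum = (l.map α).sum + l.count b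
  | [] => by simp
  | x :: t => by
    by_cases hx : x = b <;> simp [hx, flipAt, sum_map_flipAt α b t] <;> ring

theorem preSum_flipAt (α : S → ZMod 2) (a b : S) (w : OrdWord S) :
    preSum S (flipAt S α b) a w = preSum S α a w + (w.1.takeWhile (· ≠ a)).count b :=
  sum_map_flipAt α b _

theorem sufSum_flipAt (α : S → ZMod 2) (a b : S) (w : OrdWord S) :
    sufSum S (flipAt S α b) a w = sufSum S α a w + ((w.1.dropWhile (· ≠ a)).drop 1).count b :=
  sum_map_flipAt α b _

end Weights

namespace OrdWord

variable {S : Type} [DecidableEq S] {a b : S}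

theorem count_takeWhile_ne_eq_count_drop_dropWhile_ne (w : OrdWord S) (hab : a ≠ b) :
    (w.1.takeWhile (· ≠ a)).count b = ((w.1.dropWhile (· ≠ b)).drop 1).count a :=
  List.count_takeWhile_ne_eq_count_drop_dropWhile_ne hab w.2.1 (w.2.2 a) (w.2.2 b)

theorem count_takeWhile_ne_add_count_drop_dropWhile_ne (w : OrdWord S) (hba : b ≠ a) :
    (w.1.takeWhile (· ≠ a)).count b + ((w.1.dropWhile (· ≠ a)).drop 1).count b = 1 := by
  rw [List.count_takeWhile_ne_add_count_drop_dropWhile_ne hba (w.2.2 a),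
    List.count_eq_one_of_mem w.2.1 (w.2.2 b)]

theorem cast_count_takeWhile_ne (w : OrdWord S) (hab : a ≠ b) :
    ((w.1.takeWhile (· ≠ a)).count b : ZMod 2) = 1 + (w.1.takeWhile (· ≠ b)).count a := by
  refine CharTwo.add_eq_iff_eq_add.1 ?_
  rw [w.count_takeWhile_ne_eq_count_drop_dropWhile_ne hab, add_comm, ← Nat.cast_add,
    w.count_takeWhile_ne_add_count_drop_dropWhile_ne hab, Nat.cast_one]

theorem cast_count_drop_dropWhile_ne (w : OrdWord S) (hab : a ≠ b) :
    (((w.1.dropWhile (· ≠ a)).drop 1).count b : ZMod 2) =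
      1 + ((w.1.dropWhile (· ≠ b)).drop 1).count a := by
  refine CharTwo.add_eq_iff_eq_add.1 ?_
  rw [← w.count_takeWhile_ne_eq_count_drop_dropWhile_ne hab, add_comm, ← Nat.cast_add,
    w.count_takeWhile_ne_add_count_drop_dropWhile_ne hab.symm, Nat.cast_one]

end OrdWord

namespace EMod

variable {k : Type} [CommRing k] {S : Type} {α β δ : S → ZMod 2}

theorem linearMap_ext {M : Type} [AddCommGroup M] [Module k M] {f g : EMod k S α →ₗ[k] M}
    (h : ∀ w, f (mkE k S α w) = g (mkE k S α w)) : f = g :=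
  Submodule.linearMap_qext _ <| Finsupp.lhom_ext' fun w => LinearMap.ext_ring (h w)

def IsSignMap (f : EMod k S α →ₗ[k] EMod k S β) (e : OrdWord S → ZMod 2) : Prop :=
  ∀ w, f (mkE k S α w) = signZ2 k (e w) • mkE k S β w

namespace IsSignMap

variable {f : EMod k S α →ₗ[k] EMod k S β} {e e' : OrdWord S → ZMod 2}

theorem comp {g : EMod k S β →ₗ[k] EMod k S δ} (hg : IsSignMap g e') (hf : IsSignMap f e) :
    IsSignMap (g.comp f) (fun w => e w + e' w) := fun w => by
  rw [LinearMap.comp_apply, hf, map_smul, hg, smul_smul, signZ2_add, mul_comm]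

theorem neg (hf : IsSignMap f e) : IsSignMap (-f) (fun w => e w + 1) := fun w => by
  rw [LinearMap.neg_apply, hf, signZ2_add_one, neg_smul]

theorem eq_of_exponent_eq {g : EMod k S α →ₗ[k] EMod k S β} (hf : IsSignMap f e)
    (hg : IsSignMap g e') (h : ∀ w, e w = e' w) : f = g :=
  linearMap_ext fun w => by rw [hf, hg, h]

end IsSignMap

end EMod

open EMod

theorem stmt15_general (k : Type) [CommRing k] (S : Type) [DecidableEq S]
    (a b : S) (hab : a ≠ b)
    (α β γ δ : S → ZMod 2)
    (hβ : β = flipAt S α a) (hγ : γ = flipAt S α b)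
    (hδ : δ = flipAt S β b)
    (la1 : EMod k S α →ₗ[k] EMod k S β)
    (hla1 : ∀ w, la1 (mkE k S α w) = signZ2 k (preSum S α a w) • mkE k S β w)
    (lb1 : EMod k S α →ₗ[k] EMod k S γ)
    (hlb1 : ∀ w, lb1 (mkE k S α w) = signZ2 k (preSum S α b w) • mkE k S γ w)
    (lb2 : EMod k S β →ₗ[k] EMod k S δ)
    (hlb2 : ∀ w, lb2 (mkE k S β w) = signZ2 k (preSum S β b w) • mkE k S δ w)
    (la2 : EMod k S γ →ₗ[k] EMod k S δ)
    (hla2 : ∀ w, la2 (mkE k S γ w) = signZ2 k (preSum S γ a w) • mkE k S δ w)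
    (ρa1 : EMod k S α →ₗ[k] EMod k S β)
    (hρa1 : ∀ w, ρa1 (mkE k S α w) = signZ2 k (sufSum S α a w) • mkE k S β w)
    (ρb1 : EMod k S α →ₗ[k] EMod k S γ)
    (hρb1 : ∀ w, ρb1 (mkE k S α w) = signZ2 k (sufSum S α b w) • mkE k S γ w)
    (ρb2 : EMod k S β →ₗ[k] EMod k S δ)
    (hρb2 : ∀ w, ρb2 (mkE k S β w) = signZ2 k (sufSum S β b w) • mkE k S δ w)
    (ρa2 : EMod k S γ →ₗ[k] EMod k S δ)
    (hρa2 : ∀ w, ρa2 (mkE k S γ w) = signZ2 k (sufSum S γ a w) • mkE k S δ w) :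
    la2.comp lb1 = -(lb2.comp la1) ∧
    ρa2.comp ρb1 = -(ρb2.comp ρa1) ∧
    la2.comp ρb1 = ρb2.comp la1 := by
  subst hβ hγ hδ
  refine ⟨(IsSignMap.comp hla2 hlb1).eq_of_exponent_eq (IsSignMap.comp hlb2 hla1).neg fun w => ?_,
    (IsSignMap.comp hρa2 hρb1).eq_of_exponent_eq (IsSignMap.comp hρb2 hρa1).neg fun w => ?_,
    (IsSignMap.comp hla2 hρb1).eq_of_exponent_eq (IsSignMap.comp hρb2 hla1) fun w => ?_⟩
  · rw [preSum_flipAt, preSum_flipAt, w.cast_count_takeWhile_ne hab]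
    ring
  · rw [sufSum_flipAt, sufSum_flipAt, w.cast_count_drop_dropWhile_ne hab]
    ring
  · rw [preSum_flipAt, sufSum_flipAt, w.count_takeWhile_ne_eq_count_drop_dropWhile_ne hab]
    ring

/-- For distinct `a b ∈ S`: `λ_a λ_b = −λ_b λ_a`, `ρ_a ρ_b = −ρ_b ρ_a`, and
`λ_a ρ_b = ρ_b λ_a` as maps `E_S(α) → E_S(α+a+b)`. -/
theorem stmt15 (k : Type) [CommRing k] (S : Type) [DecidableEq S] [Fintype S]
    (a b : S) (hab : a ≠ b)
    (α β γ δ : S → ZMod 2)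
    (hβ : β = flipAt S α a) (hγ : γ = flipAt S α b)
    (hδ : δ = flipAt S β b) (hδ' : δ = flipAt S γ a)
    (la1 : EMod k S α →ₗ[k] EMod k S β)
    (hla1 : ∀ w, la1 (mkE k S α w) = signZ2 k (preSum S α a w) • mkE k S β w)
    (lb1 : EMod k S α →ₗ[k] EMod k S γ)
    (hlb1 : ∀ w, lb1 (mkE k S α w) = signZ2 k (preSum S α b w) • mkE k S γ w)
    (lb2 : EMod k S β →ₗ[k] EMod k S δ)
    (hlb2 : ∀ w, lb2 (mkE k S β w) = signZ2 k (preSum S β b w) • mkE k S δ w)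
    (la2 : EMod k S γ →ₗ[k] EMod k S δ)
    (hla2 : ∀ w, la2 (mkE k S γ w) = signZ2 k (preSum S γ a w) • mkE k S δ w)
    (ρa1 : EMod k S α →ₗ[k] EMod k S β)
    (hρa1 : ∀ w, ρa1 (mkE k S α w) = signZ2 k (sufSum S α a w) • mkE k S β w)
    (ρb1 : EMod k S α →ₗ[k] EMod k S γ)
    (hρb1 : ∀ w, ρb1 (mkE k S α w) = signZ2 k (sufSum S α b w) • mkE k S γ w)
    (ρb2 : EMod k S β →ₗ[k] EMod k S δ)
    (hρb2 : ∀ w, ρb2 (mkE k S β w) = signZ2 k (sufSum S β b w) • mkE k S δ w)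
    (ρa2 : EMod k S γ →ₗ[k] EMod k S δ)
    (hρa2 : ∀ w, ρa2 (mkE k S γ w) = signZ2 k (sufSum S γ a w) • mkE k S δ w) :
    la2.comp lb1 = -(lb2.comp la1) ∧
    ρa2.comp ρb1 = -(ρb2.comp ρa1) ∧
    la2.comp ρb1 = ρb2.comp la1 :=
  stmt15_general k S a b hab α β γ δ hβ hγ hδ la1 hla1 lb1 hlb1 lb2 hlb2 la2 hla2 ρa1 hρa1 ρb1 hρb1
    ρb2 hρb2 ρa2 hρa2
end

section
/- Let A be an additive category, X^{•,•} a bounded double complex, and r ∈ ℤ. Let σ^{≤r-1}X denote the double complex with columns X^{i,•} for i ≤ r−1 and zero otherwise (horizontal differentials kept where both columns survive), and σ^{≥r}X similarly for i ≥ r. Let φ : Tot(σ^{≤r-1}X)[1] → Tot(σ^{≥r}X) be the morphism induced by the horizontal differential d_H : X^{r-1,j} → X^{r,j}. Then φ is a morphism of complexes and Tot(X) is isomorphic, as a cochain complex, to the mapping cone Cone(φ). -/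
open CategoryTheory CategoryTheory.Limits

/-- An index of the degree-`n` part of the total complex: a pair `(i,j)` with `i + j = n`. -/
def TotIdx (n : ℤ) : Type := {p : ℤ × ℤ // p.1 + p.2 = n}

/-- Constructor for total-complex indices. -/
def mkTotIdx (n i j : ℤ) (hij : i + j = n) : TotIdx n := ⟨(i, j), hij⟩

/-- Indices of the degree-`n` part of the total complex of the stupid truncation
`σ^{≤ r−1} X` (columns `i ≤ r−1`). -/
def LeIdx (r n : ℤ) : Type := {p : ℤ × ℤ // p.1 + p.2 = n ∧ p.1 ≤ r - 1}

/-- Constructor for `LeIdx`. -/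
def mkLeIdx (r n i j : ℤ) (hij : i + j = n) (hi : i ≤ r - 1) : LeIdx r n := ⟨(i, j), hij, hi⟩

/-- Indices of the degree-`n` part of the total complex of the stupid truncation
`σ^{≥ r} X` (columns `i ≥ r`). -/
def GeIdx (r n : ℤ) : Type := {p : ℤ × ℤ // p.1 + p.2 = n ∧ r ≤ p.1}

/-- Constructor for `GeIdx`. -/
def mkGeIdx (r n i j : ℤ) (hij : i + j = n) (hi : r ≤ i) : GeIdx r n := ⟨(i, j), hij, hi⟩

/-!
Each of the given maps `dT`, `dge`, `dle`, `φ` is determined by its components on the summands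
`X i j`, so it is the canonical map built from `d_H` and `d_V`. Sorting the summands of `Tot(X)^n`
into the columns `i ≥ r` and `i ≤ r - 1` identifies `Tot(X)^n` with
`Tot(σ^{≥r}X)^n ⊞ Tot(σ^{≤r-1}X)^n`, and under this identification the total differential has
exactly the components of the cone differential: the only component crossing the cut is
`d_H : X^{r-1,j} ⟶ X^{r,j}`, which is `φ`. That `φ` commutes with the differentials (the shifted
one carrying a sign) is a componentwise check from `d_H ≫ d_H = 0`, `d_H ≫ d_V = d_V ≫ d_H` and
`(-1)^r = -(-1)^(r-1)`.
-/

universe v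

section

variable {A : Type*} [Category.{v} A] [Preadditive A] {X : ℤ → ℤ → A} {r : ℤ}

-- Summands are addressed by anonymous constructors rather than `mkTotIdx` etc.:
-- `rw` does not see through the latter.
theorem tot_hom_ext {n : ℤ} [HasBiproduct (fun p : TotIdx n => X p.1.1 p.1.2)] {Z : A}
    {f g : (⨁ fun p : TotIdx n => X p.1.1 p.1.2) ⟶ Z}
    (h : ∀ i j (hij : i + j = n),
      biproduct.ι (fun p : TotIdx n => X p.1.1 p.1.2) ⟨(i, j), hij⟩ ≫ f =
        biproduct.ι (fun p : TotIdx n => X p.1.1 p.1.2) ⟨(i, j), hij⟩ ≫ g) :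
    f = g :=
  biproduct.hom_ext' _ _ fun p => h p.1.1 p.1.2 p.2

theorem le_hom_ext {n : ℤ} [HasBiproduct (fun p : LeIdx r n => X p.1.1 p.1.2)] {Z : A}
    {f g : (⨁ fun p : LeIdx r n => X p.1.1 p.1.2) ⟶ Z}
    (h : ∀ i j (hij : i + j = n) (hi : i ≤ r - 1),
      biproduct.ι (fun p : LeIdx r n => X p.1.1 p.1.2) ⟨(i, j), hij, hi⟩ ≫ f =
        biproduct.ι (fun p : LeIdx r n => X p.1.1 p.1.2) ⟨(i, j), hij, hi⟩ ≫ g) :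
    f = g :=
  biproduct.hom_ext' _ _ fun p => h p.1.1 p.1.2 p.2.1 p.2.2

theorem ge_hom_ext {n : ℤ} [HasBiproduct (fun p : GeIdx r n => X p.1.1 p.1.2)] {Z : A}
    {f g : (⨁ fun p : GeIdx r n => X p.1.1 p.1.2) ⟶ Z}
    (h : ∀ i j (hij : i + j = n) (hi : r ≤ i),
      biproduct.ι (fun p : GeIdx r n => X p.1.1 p.1.2) ⟨(i, j), hij, hi⟩ ≫ f =
        biproduct.ι (fun p : GeIdx r n => X p.1.1 p.1.2) ⟨(i, j), hij, hi⟩ ≫ g) :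
    f = g :=
  biproduct.hom_ext' _ _ fun p => h p.1.1 p.1.2 p.2.1 p.2.2

end

section Differentials

variable {A : Type*} [Category.{v} A] [Preadditive A] (X : ℤ → ℤ → A)
    (dH : ∀ i j : ℤ, X i j ⟶ X (i + 1) j) (dV : ∀ i j : ℤ, X i j ⟶ X i (j + 1)) (r : ℤ)

section

variable [∀ n : ℤ, HasBiproduct (fun p : TotIdx n => X p.1.1 p.1.2)]

noncomputable def totalDiff (n : ℤ) :
    (⨁ fun p : TotIdx n => X p.1.1 p.1.2) ⟶ (⨁ fun p : TotIdx (n + 1) => X p.1.1 p.1.2) :=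
  biproduct.desc fun p : TotIdx n =>
    dH _ _ ≫ biproduct.ι (fun q : TotIdx (n + 1) => X q.1.1 q.1.2) ⟨(p.1.1 + 1, p.1.2), by
      have := p.2; omega⟩ +
    (Int.negOnePow p.1.1 : ℤ) • (dV _ _ ≫
      biproduct.ι (fun q : TotIdx (n + 1) => X q.1.1 q.1.2) ⟨(p.1.1, p.1.2 + 1), by
        have := p.2; omega⟩)

variable {X dH dV}

theorem ι_totalDiff {n i j : ℤ} (hij : i + j = n) :
    biproduct.ι (fun p : TotIdx n => X p.1.1 p.1.2) ⟨(i, j), hij⟩ ≫ totalDiff X dH dV n =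
      dH i j ≫ biproduct.ι (fun p : TotIdx (n + 1) => X p.1.1 p.1.2) ⟨(i + 1, j), by omega⟩ +
        (Int.negOnePow i : ℤ) •
          (dV i j ≫ biproduct.ι (fun p : TotIdx (n + 1) => X p.1.1 p.1.2) ⟨(i, j + 1), by omega⟩) :=
  biproduct.ι_desc _ _

end

section

variable [∀ n : ℤ, HasBiproduct (fun p : GeIdx r n => X p.1.1 p.1.2)]

noncomputable def geTotalDiff (n : ℤ) :
    (⨁ fun p : GeIdx r n => X p.1.1 p.1.2) ⟶ (⨁ fun p : GeIdx r (n + 1) => X p.1.1 p.1.2) :=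
  biproduct.desc fun p : GeIdx r n =>
    dH _ _ ≫ biproduct.ι (fun q : GeIdx r (n + 1) => X q.1.1 q.1.2) ⟨(p.1.1 + 1, p.1.2), by
      have := p.2; omega⟩ +
    (Int.negOnePow p.1.1 : ℤ) • (dV _ _ ≫
      biproduct.ι (fun q : GeIdx r (n + 1) => X q.1.1 q.1.2) ⟨(p.1.1, p.1.2 + 1), by
        have := p.2; omega⟩)

variable {X dH dV r}

theorem ι_geTotalDiff {n i j : ℤ} (hij : i + j = n) (hi : r ≤ i) :
    biproduct.ι (fun p : GeIdx r n => X p.1.1 p.1.2) ⟨(i, j), hij, hi⟩ ≫ geTotalDiff X dH dV r n =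
      dH i j ≫ biproduct.ι (fun p : GeIdx r (n + 1) => X p.1.1 p.1.2)
          ⟨(i + 1, j), by omega, by omega⟩ +
        (Int.negOnePow i : ℤ) • (dV i j ≫
          biproduct.ι (fun p : GeIdx r (n + 1) => X p.1.1 p.1.2) ⟨(i, j + 1), by omega, hi⟩) :=
  biproduct.ι_desc _ _

end

section

variable [∀ n : ℤ, HasBiproduct (fun p : LeIdx r n => X p.1.1 p.1.2)]

noncomputable def leTotalDiff (n : ℤ) :
    (⨁ fun p : LeIdx r n => X p.1.1 p.1.2) ⟶ (⨁ fun p : LeIdx r (n + 1) => X p.1.1 p.1.2) :=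
  biproduct.desc fun p : LeIdx r n =>
    (if h : p.1.1 + 1 ≤ r - 1 then
      dH _ _ ≫ biproduct.ι (fun q : LeIdx r (n + 1) => X q.1.1 q.1.2) ⟨(p.1.1 + 1, p.1.2), by
        have := p.2; omega⟩
    else 0) +
    (Int.negOnePow p.1.1 : ℤ) • (dV _ _ ≫
      biproduct.ι (fun q : LeIdx r (n + 1) => X q.1.1 q.1.2) ⟨(p.1.1, p.1.2 + 1), by
        have := p.2; omega⟩)

variable {X dH dV r}

theorem ι_leTotalDiff_of_lt {n i j : ℤ} (hij : i + j = n) (hi : i + 1 ≤ r - 1) :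
    biproduct.ι (fun p : LeIdx r n => X p.1.1 p.1.2) ⟨(i, j), hij, by omega⟩ ≫
        leTotalDiff X dH dV r n =
      dH i j ≫ biproduct.ι (fun p : LeIdx r (n + 1) => X p.1.1 p.1.2) ⟨(i + 1, j), by omega, hi⟩ +
        (Int.negOnePow i : ℤ) • (dV i j ≫ biproduct.ι (fun p : LeIdx r (n + 1) => X p.1.1 p.1.2)
          ⟨(i, j + 1), by omega, by omega⟩) :=
  (biproduct.ι_desc _ _).trans (by rw [dif_pos hi])

theorem ι_leTotalDiff_of_eq {n i j : ℤ} (hij : i + j = n) (hi : i = r - 1) :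
    biproduct.ι (fun p : LeIdx r n => X p.1.1 p.1.2) ⟨(i, j), hij, hi.le⟩ ≫
        leTotalDiff X dH dV r n =
      (Int.negOnePow i : ℤ) • (dV i j ≫
        biproduct.ι (fun p : LeIdx r (n + 1) => X p.1.1 p.1.2) ⟨(i, j + 1), by omega, hi.le⟩) :=
  (biproduct.ι_desc _ _).trans (by rw [dif_neg (show ¬i + 1 ≤ r - 1 by omega), zero_add])

end

section

variable [∀ n : ℤ, HasBiproduct (fun p : LeIdx r n => X p.1.1 p.1.2)]
    [∀ n : ℤ, HasBiproduct (fun p : GeIdx r n => X p.1.1 p.1.2)]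

noncomputable def horizCut (n : ℤ) :
    (⨁ fun p : LeIdx r n => X p.1.1 p.1.2) ⟶ (⨁ fun p : GeIdx r (n + 1) => X p.1.1 p.1.2) :=
  biproduct.desc fun p : LeIdx r n =>
    if h : p.1.1 = r - 1 then
      dH _ _ ≫ biproduct.ι (fun q : GeIdx r (n + 1) => X q.1.1 q.1.2) ⟨(p.1.1 + 1, p.1.2), by
        have := p.2; omega⟩
    else 0

variable {X dH dV r}

theorem ι_horizCut_of_eq {n i j : ℤ} (hij : i + j = n) (hi : i = r - 1) :
    biproduct.ι (fun p : LeIdx r n => X p.1.1 p.1.2) ⟨(i, j), hij, hi.le⟩ ≫ horizCut X dH r n =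
      dH i j ≫ biproduct.ι (fun p : GeIdx r (n + 1) => X p.1.1 p.1.2)
        ⟨(i + 1, j), by omega, by omega⟩ :=
  (biproduct.ι_desc _ _).trans (dif_pos hi)

theorem ι_horizCut_of_lt {n i j : ℤ} (hij : i + j = n) (hi : i + 1 ≤ r - 1) :
    biproduct.ι (fun p : LeIdx r n => X p.1.1 p.1.2) ⟨(i, j), hij, by omega⟩ ≫
      horizCut X dH r n = 0 :=
  (biproduct.ι_desc _ _).trans (dif_neg (show i ≠ r - 1 by omega))

theorem horizCut_comp_geTotalDiff (hHH : ∀ i j : ℤ, dH i j ≫ dH (i + 1) j = 0)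
    (hHV : ∀ i j : ℤ, dH i j ≫ dV (i + 1) j = dV i j ≫ dH i (j + 1)) (n : ℤ) :
    horizCut X dH r n ≫ geTotalDiff X dH dV r (n + 1) =
      -(leTotalDiff X dH dV r n ≫ horizCut X dH r (n + 1)) := by
  refine le_hom_ext fun i j hij hi => ?_
  rw [Preadditive.comp_neg]
  rcases (show i = r - 1 ∨ i + 1 ≤ r - 1 by omega) with h | h
  · rw [reassoc_of% ι_horizCut_of_eq hij h, ι_geTotalDiff, Preadditive.comp_add,
      reassoc_of% hHH, zero_comp, zero_add, Preadditive.comp_zsmul, reassoc_of% hHV,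
      reassoc_of% ι_leTotalDiff_of_eq hij h, Preadditive.zsmul_comp, Category.assoc,
      ι_horizCut_of_eq (by omega) h, Int.negOnePow_succ, Units.val_neg, neg_smul]
    all_goals omega
  · rw [reassoc_of% ι_horizCut_of_lt hij h, zero_comp, reassoc_of% ι_leTotalDiff_of_lt hij h,
      Preadditive.add_comp, Preadditive.zsmul_comp, Category.assoc, Category.assoc,
      ι_horizCut_of_lt (by omega) h, comp_zero, smul_zero, add_zero]
    rcases (show i + 1 = r - 1 ∨ i + 1 + 1 ≤ r - 1 by omega) with h' | h'
    · rw [ι_horizCut_of_eq (by omega) h', reassoc_of% hHH, zero_comp, neg_zero]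
    · rw [ι_horizCut_of_lt (by omega) h', comp_zero, neg_zero]

end

end Differentials

section Splitting

variable {A : Type*} [Category.{v} A] [Preadditive A] [HasBinaryBiproducts A] (X : ℤ → ℤ → A)
    (r : ℤ)
    [∀ n : ℤ, HasBiproduct (fun p : TotIdx n => X p.1.1 p.1.2)]
    [∀ n : ℤ, HasBiproduct (fun p : LeIdx r n => X p.1.1 p.1.2)]
    [∀ n : ℤ, HasBiproduct (fun p : GeIdx r n => X p.1.1 p.1.2)]

noncomputable def totToBiprod (n : ℤ) : (⨁ fun p : TotIdx n => X p.1.1 p.1.2) ⟶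
    (⨁ fun p : GeIdx r n => X p.1.1 p.1.2) ⊞ (⨁ fun p : LeIdx r n => X p.1.1 p.1.2) :=
  biproduct.desc fun p : TotIdx n =>
    if h : r ≤ p.1.1 then
      biproduct.ι (fun q : GeIdx r n => X q.1.1 q.1.2) ⟨p.1, p.2, h⟩ ≫ biprod.inl
    else
      biproduct.ι (fun q : LeIdx r n => X q.1.1 q.1.2) ⟨p.1, p.2, by omega⟩ ≫ biprod.inr

variable {X r}

theorem ι_totToBiprod_of_ge {n i j : ℤ} (hij : i + j = n) (hi : r ≤ i) :
    biproduct.ι (fun p : TotIdx n => X p.1.1 p.1.2) ⟨(i, j), hij⟩ ≫ totToBiprod X r n =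
      biproduct.ι (fun q : GeIdx r n => X q.1.1 q.1.2) ⟨(i, j), hij, hi⟩ ≫ biprod.inl :=
  (biproduct.ι_desc _ _).trans (dif_pos hi)

theorem ι_totToBiprod_of_le {n i j : ℤ} (hij : i + j = n) (hi : i ≤ r - 1) :
    biproduct.ι (fun p : TotIdx n => X p.1.1 p.1.2) ⟨(i, j), hij⟩ ≫ totToBiprod X r n =
      biproduct.ι (fun q : LeIdx r n => X q.1.1 q.1.2) ⟨(i, j), hij, hi⟩ ≫ biprod.inr :=
  (biproduct.ι_desc _ _).trans (dif_neg (show ¬r ≤ i by omega))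

variable (X r)

noncomputable def totSplitIso (n : ℤ) : (⨁ fun p : TotIdx n => X p.1.1 p.1.2) ≅
    (⨁ fun p : GeIdx r n => X p.1.1 p.1.2) ⊞ (⨁ fun p : LeIdx r n => X p.1.1 p.1.2) where
  hom := totToBiprod X r n
  inv := biprod.desc
    (biproduct.desc fun q : GeIdx r n =>
      biproduct.ι (fun p : TotIdx n => X p.1.1 p.1.2) ⟨q.1, q.2.1⟩)
    (biproduct.desc fun q : LeIdx r n =>
      biproduct.ι (fun p : TotIdx n => X p.1.1 p.1.2) ⟨q.1, q.2.1⟩)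
  hom_inv_id := by
    refine tot_hom_ext fun i j hij => ?_
    rcases le_or_gt r i with hi | hi
    · rw [reassoc_of% ι_totToBiprod_of_ge hij hi, biprod.inl_desc, Category.comp_id]
      exact biproduct.ι_desc _ _
    · rw [reassoc_of% ι_totToBiprod_of_le hij (by omega), biprod.inr_desc, Category.comp_id]
      exact biproduct.ι_desc _ _
  inv_hom_id := by
    refine biprod.hom_ext' _ _ (ge_hom_ext fun i j hij hi => ?_) (le_hom_ext fun i j hij hi => ?_)
    · rw [biprod.inl_desc_assoc, Category.comp_id]
      exact (biproduct.ι_desc_assoc _ _ _).trans (ι_totToBiprod_of_ge hij hi)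
    · rw [biprod.inr_desc_assoc, Category.comp_id]
      exact (biproduct.ι_desc_assoc _ _ _).trans (ι_totToBiprod_of_le hij hi)

variable (dH : ∀ i j : ℤ, X i j ⟶ X (i + 1) j) (dV : ∀ i j : ℤ, X i j ⟶ X i (j + 1))

noncomputable def coneDiff (n : ℤ) :
    (⨁ fun p : GeIdx r n => X p.1.1 p.1.2) ⊞ (⨁ fun p : LeIdx r n => X p.1.1 p.1.2) ⟶
      (⨁ fun p : GeIdx r (n + 1) => X p.1.1 p.1.2) ⊞ (⨁ fun p : LeIdx r (n + 1) => X p.1.1 p.1.2) :=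
  biprod.desc (geTotalDiff X dH dV r n ≫ biprod.inl)
    (horizCut X dH r n ≫ biprod.inl + leTotalDiff X dH dV r n ≫ biprod.inr)

variable {X r dH dV}

theorem totToBiprod_comp_coneDiff (n : ℤ) :
    totToBiprod X r n ≫ coneDiff X r dH dV n = totalDiff X dH dV n ≫ totToBiprod X r (n + 1) := by
  refine tot_hom_ext fun i j hij => ?_
  rw [coneDiff]
  rw [reassoc_of% ι_totalDiff hij, Preadditive.add_comp, Preadditive.zsmul_comp, Category.assoc,
    Category.assoc]
  rcases (show r ≤ i ∨ i = r - 1 ∨ i + 1 ≤ r - 1 by omega) with h | h | h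
  · rw [reassoc_of% ι_totToBiprod_of_ge hij h, biprod.inl_desc,
      reassoc_of% ι_geTotalDiff hij h, Preadditive.add_comp, Preadditive.zsmul_comp,
      Category.assoc, Category.assoc, ι_totToBiprod_of_ge, ι_totToBiprod_of_ge]
    all_goals omega
  · rw [reassoc_of% ι_totToBiprod_of_le hij h.le, biprod.inr_desc, Preadditive.comp_add,
      reassoc_of% ι_horizCut_of_eq hij h, reassoc_of% ι_leTotalDiff_of_eq hij h,
      Preadditive.zsmul_comp, Category.assoc, ι_totToBiprod_of_ge, ι_totToBiprod_of_le]
    all_goals omega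
  · rw [reassoc_of% ι_totToBiprod_of_le hij (by omega), biprod.inr_desc,
      Preadditive.comp_add, reassoc_of% ι_horizCut_of_lt hij h, zero_comp, zero_add,
      reassoc_of% ι_leTotalDiff_of_lt hij h, Preadditive.add_comp, Preadditive.zsmul_comp,
      Category.assoc, Category.assoc, ι_totToBiprod_of_le, ι_totToBiprod_of_le]
    all_goals omega

end Splitting

/-- For a bounded double complex `X` and the morphism
`φ : Tot(σ^{≤r−1}X)[1] ⟶ Tot(σ^{≥r}X)` induced by the horizontal differential `d_H`,
`φ` is a morphism of complexes and the total complex `Tot(X)` is isomorphic, as a cochain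
complex, to the mapping cone `Cone(φ)` (whose degree-`n` part is
`Tot(σ^{≥r}X)^n ⊕ Tot(σ^{≤r−1}X)[1]^{n+1}`). -/
theorem stmt18 {A : Type*} [Category A] [Preadditive A] [HasBinaryBiproducts A]
    (X : ℤ → ℤ → A)
    (dH : ∀ i j : ℤ, X i j ⟶ X (i + 1) j)
    (dV : ∀ i j : ℤ, X i j ⟶ X i (j + 1))
    (hHH : ∀ i j : ℤ, dH i j ≫ dH (i + 1) j = 0)
    (hHV : ∀ i j : ℤ, dH i j ≫ dV (i + 1) j = dV i j ≫ dH i (j + 1))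
    (r : ℤ)
    [htot : ∀ n : ℤ, HasBiproduct (fun p : TotIdx n => X p.1.1 p.1.2)]
    [hle : ∀ n : ℤ, HasBiproduct (fun p : LeIdx r n => X p.1.1 p.1.2)]
    [hge : ∀ n : ℤ, HasBiproduct (fun p : GeIdx r n => X p.1.1 p.1.2)]
    -- the total differential of `X`
    (dT : ∀ n : ℤ, (⨁ fun p : TotIdx n => X p.1.1 p.1.2) ⟶
        (⨁ fun p : TotIdx (n + 1) => X p.1.1 p.1.2))
    (hdT : ∀ (n i j : ℤ) (hij : i + j = n),
      biproduct.ι (fun p : TotIdx n => X p.1.1 p.1.2) (mkTotIdx n i j hij) ≫ dT n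
        = dH i j ≫ biproduct.ι (fun p : TotIdx (n + 1) => X p.1.1 p.1.2)
            (mkTotIdx (n + 1) (i + 1) j (by omega))
          + (Int.negOnePow i : ℤ) •
            (dV i j ≫ biproduct.ι (fun p : TotIdx (n + 1) => X p.1.1 p.1.2)
              (mkTotIdx (n + 1) i (j + 1) (by omega))))
    -- the total differential of the truncation `σ^{≤ r−1} X`
    (dle : ∀ n : ℤ, (⨁ fun p : LeIdx r n => X p.1.1 p.1.2) ⟶
        (⨁ fun p : LeIdx r (n + 1) => X p.1.1 p.1.2))
    (hdle₁ : ∀ (n i j : ℤ) (hij : i + j = n) (hi : i + 1 ≤ r - 1),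
      biproduct.ι (fun p : LeIdx r n => X p.1.1 p.1.2) (mkLeIdx r n i j hij (by omega)) ≫ dle n
        = dH i j ≫ biproduct.ι (fun p : LeIdx r (n + 1) => X p.1.1 p.1.2)
            (mkLeIdx r (n + 1) (i + 1) j (by omega) hi)
          + (Int.negOnePow i : ℤ) •
            (dV i j ≫ biproduct.ι (fun p : LeIdx r (n + 1) => X p.1.1 p.1.2)
              (mkLeIdx r (n + 1) i (j + 1) (by omega) (by omega))))
    (hdle₂ : ∀ (n j : ℤ) (hij : (r - 1) + j = n),
      biproduct.ι (fun p : LeIdx r n => X p.1.1 p.1.2)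
          (mkLeIdx r n (r - 1) j hij (by omega)) ≫ dle n
        = (Int.negOnePow (r - 1) : ℤ) •
            (dV (r - 1) j ≫ biproduct.ι (fun p : LeIdx r (n + 1) => X p.1.1 p.1.2)
              (mkLeIdx r (n + 1) (r - 1) (j + 1) (by omega) (by omega))))
    -- the total differential of the truncation `σ^{≥ r} X`
    (dge : ∀ n : ℤ, (⨁ fun p : GeIdx r n => X p.1.1 p.1.2) ⟶
        (⨁ fun p : GeIdx r (n + 1) => X p.1.1 p.1.2))
    (hdge : ∀ (n i j : ℤ) (hij : i + j = n) (hi : r ≤ i),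
      biproduct.ι (fun p : GeIdx r n => X p.1.1 p.1.2) (mkGeIdx r n i j hij hi) ≫ dge n
        = dH i j ≫ biproduct.ι (fun p : GeIdx r (n + 1) => X p.1.1 p.1.2)
            (mkGeIdx r (n + 1) (i + 1) j (by omega) (by omega))
          + (Int.negOnePow i : ℤ) •
            (dV i j ≫ biproduct.ι (fun p : GeIdx r (n + 1) => X p.1.1 p.1.2)
              (mkGeIdx r (n + 1) i (j + 1) (by omega) hi)))
    -- the morphism `φ : Tot(σ^{≤r−1}X)[1] ⟶ Tot(σ^{≥r}X)` induced by `d_H`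
    (φ : ∀ n : ℤ, (⨁ fun p : LeIdx r n => X p.1.1 p.1.2) ⟶
        (⨁ fun p : GeIdx r (n + 1) => X p.1.1 p.1.2))
    (hφ₁ : ∀ (n j : ℤ) (hij : (r - 1) + j = n),
      biproduct.ι (fun p : LeIdx r n => X p.1.1 p.1.2)
          (mkLeIdx r n (r - 1) j hij (by omega)) ≫ φ n
        = dH (r - 1) j ≫
            (biproduct.ι (fun p : GeIdx r (n + 1) => X p.1.1 p.1.2)
              (mkGeIdx r (n + 1) (r - 1 + 1) j (by omega) (by omega))))
    (hφ₂ : ∀ (n i j : ℤ) (hij : i + j = n) (hi : i + 1 ≤ r - 1),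
      biproduct.ι (fun p : LeIdx r n => X p.1.1 p.1.2)
          (mkLeIdx r n i j hij (by omega)) ≫ φ n = 0) :
    -- `φ` is a morphism of complexes (from the shifted complex, whose differential is `−dle`)
    (∀ n : ℤ, φ n ≫ dge (n + 1) = -(dle n ≫ φ (n + 1))) ∧
    -- `Tot(X)` is isomorphic, as a cochain complex, to `Cone(φ)`
    ∃ ψ : ∀ n : ℤ, (⨁ fun p : TotIdx n => X p.1.1 p.1.2) ≅
        ((⨁ fun p : GeIdx r n => X p.1.1 p.1.2) ⊞ (⨁ fun p : LeIdx r n => X p.1.1 p.1.2)),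
      ∀ n : ℤ,
        (ψ n).hom ≫
          biprod.desc (dge n ≫ biprod.inl) (φ n ≫ biprod.inl + dle n ≫ biprod.inr)
          = dT n ≫ (ψ (n + 1)).hom := by
  obtain rfl : dT = totalDiff X dH dV :=
    funext fun n => tot_hom_ext fun i j hij => (hdT n i j hij).trans (ι_totalDiff hij).symm
  obtain rfl : dge = geTotalDiff X dH dV r := funext fun n =>
    ge_hom_ext fun i j hij hi => (hdge n i j hij hi).trans (ι_geTotalDiff hij hi).symm
  obtain rfl : dle = leTotalDiff X dH dV r := by
    refine funext fun n => le_hom_ext fun i j hij hi => ?_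
    rcases (show i = r - 1 ∨ i + 1 ≤ r - 1 by omega) with rfl | h
    · exact (hdle₂ n j hij).trans (ι_leTotalDiff_of_eq hij rfl).symm
    · exact (hdle₁ n i j hij h).trans (ι_leTotalDiff_of_lt hij h).symm
  obtain rfl : φ = horizCut X dH r := by
    refine funext fun n => le_hom_ext fun i j hij hi => ?_
    rcases (show i = r - 1 ∨ i + 1 ≤ r - 1 by omega) with rfl | h
    · exact (hφ₁ n j hij).trans (ι_horizCut_of_eq hij rfl).symm
    · exact (hφ₂ n i j hij h).trans (ι_horizCut_of_lt hij h).symm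
  exact ⟨horizCut_comp_geTotalDiff hHH hHV, totSplitIso X r, totToBiprod_comp_coneDiff⟩
end
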